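/- A cubic graph that is irreducible for an orientable surface S_k (every proper subgraph embeds in S_k but G does not) contains no triangle. -/

import Mathlib

open SimpleGraph

/-- A rotation system (combinatorial embedding into an orientable surface):
a permutation of the darts whose cycles are exactly the stars at the vertices. -/
structure RotationSystem {V : Type*} (G : SimpleGraph V) where
  rot : Equiv.Perm G.Dart
  fst_rot : ∀ d, (rot d).fst = d.fst
  star_cyc : ∀ d d' : G.Dart, d.fst = d'.fst → rot.SameCycle d d'

/-- The dart-reversal involution as a permutation. -/
def dartSymmPerm {V : Type*} (G : SimpleGraph V) : Equiv.Perm G.Dart :=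
  ⟨SimpleGraph.Dart.symm, SimpleGraph.Dart.symm,
    SimpleGraph.Dart.symm_symm, SimpleGraph.Dart.symm_symm⟩

/-- The face-tracing permutation of a rotation system. -/
def facePerm {V : Type*} {G : SimpleGraph V} (R : RotationSystem G) : Equiv.Perm G.Dart :=
  (dartSymmPerm G).trans R.rot

/-- The number of faces of the embedding determined by a rotation system: the number of
orbits of the face-tracing permutation, plus one face for each isolated vertex. -/
noncomputable def numFaces {V : Type*} {G : SimpleGraph V} (R : RotationSystem G) : ℕ :=
  Nat.card (Quotient (Equiv.Perm.SameCycle.setoid (facePerm R))) +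
    Nat.card {v : V // ∀ d : G.Dart, d.fst ≠ v}

/-- Twice the total genus of the embedding: `E + 2c - V - F` (Euler's formula). -/
noncomputable def eulerDefect {V : Type*} {G : SimpleGraph V} (R : RotationSystem G) : ℤ :=
  (Nat.card G.edgeSet : ℤ) + 2 * Nat.card G.ConnectedComponent
    - Nat.card V - numFaces R

/-- `G` embeds in the orientable surface `S_k` of genus `k`: it has a rotation system
whose total genus, given by Euler's formula, is at most `k`. -/
def EmbedsInGenus {V : Type*} (G : SimpleGraph V) (k : ℕ) : Prop :=
  ∃ R : RotationSystem G, eulerDefect R ≤ 2 * k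

/-- `G` is irreducible for the surface `S_k`: `G` does not embed in `S_k`, but every
proper subgraph of `G` does. -/
def IrreducibleForSurface {V : Type*} (G : SimpleGraph V) (k : ℕ) : Prop :=
  ¬ EmbedsInGenus G k ∧ ∀ H : SimpleGraph V, H ≤ G → H ≠ G → EmbedsInGenus H k

/-!
Let `v₁v₂v₃` be a triangle. By irreducibility `G - v₁v₂` has an embedding of genus at most `k`.
As `v₃` has degree three, its darts towards `v₁` and `v₂` are consecutive in the rotation at `v₃`,
so one face passes through both `v₁` and `v₂`. Drawing the edge `v₁v₂` across that face splits it
in two: edges and faces both go up by one and the number of components does not go up, so the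
genus does not increase and `G` embeds in `S_k`, a contradiction.
-/

namespace Equiv.Perm

variable {α β : Type*}

theorem SameCycle.mem_of_mapsTo [Finite α] {σ : Perm α} {S : Set α} (hS : Set.MapsTo σ S S)
    {x y : α} (h : σ.SameCycle x y) (hx : x ∈ S) : y ∈ S := by
  obtain ⟨i, -, rfl⟩ := h.exists_pow_eq'
  rw [coe_pow]
  exact hS.iterate i hx

theorem SameCycle.map_of_forall_sameCycle_apply {σ : Perm α} {τ : Perm β} {π : β → α}
    (hstep : ∀ z, σ.SameCycle (π z) (π (τ z))) {a b : β} (h : τ.SameCycle a b) :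
    σ.SameCycle (π a) (π b) := by
  obtain ⟨n, rfl⟩ := h
  induction n using Int.induction_on generalizing a with
  | zero => exact SameCycle.refl _ _
  | succ n ih =>
    rw [zpow_add_one, mul_apply]
    exact (hstep a).trans ih
  | pred n ih =>
    have hback := hstep (τ⁻¹ a)
    rw [coe_inv, apply_symm_apply] at hback
    rw [zpow_sub_one, mul_apply]
    exact hback.symm.trans ih

theorem card_quotient_sameCycle_lt_of_surjective [Finite β] {σ : Perm α} {τ : Perm β}
    {π : β → α} (hπ : Function.Surjective π) (hstep : ∀ z, σ.SameCycle (π z) (π (τ z)))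
    {x y : β} (hxy : ¬ τ.SameCycle x y) (hπxy : σ.SameCycle (π x) (π y)) :
    Nat.card (Quotient (SameCycle.setoid σ)) < Nat.card (Quotient (SameCycle.setoid τ)) := by
  have : Finite α := Finite.of_surjective π hπ
  let πbar : Quotient (SameCycle.setoid τ) → Quotient (SameCycle.setoid σ) :=
    Quotient.map π fun _ _ ↦ SameCycle.map_of_forall_sameCycle_apply hstep
  have hsurj : Function.Surjective πbar := by
    rintro ⟨a⟩
    obtain ⟨z, rfl⟩ := hπ a
    exact ⟨⟦z⟧, rfl⟩
  have hnotinj : ¬ Function.Injective πbar := fun hinj ↦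
    hxy (Quotient.exact (hinj (Quotient.sound hπxy : πbar ⟦x⟧ = πbar ⟦y⟧)))
  have := Fintype.ofFinite (Quotient (SameCycle.setoid σ))
  have := Fintype.ofFinite (Quotient (SameCycle.setoid τ))
  simpa only [Nat.card_eq_fintype_card] using
    Fintype.card_lt_of_surjective_not_injective πbar hsurj hnotinj

variable [DecidableEq α]

/-- `σ` with the fixed point `x` moved into the cycle of `a`, right after `a`. -/
def insertAfter (σ : Perm α) (a x : α) : Perm α := swap (σ a) x * σ

variable {σ : Perm α} {a x : α}

@[simp]
theorem insertAfter_apply_left : σ.insertAfter a x a = x := by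
  simp [insertAfter]

theorem insertAfter_apply_right (hx : σ x = x) : σ.insertAfter a x x = σ a := by
  simp [insertAfter, hx]

theorem insertAfter_apply_of_ne (hx : σ x = x) {b : α} (ha : b ≠ a) (hbx : b ≠ x) :
    σ.insertAfter a x b = σ b := by
  refine swap_apply_of_ne_of_ne (σ.injective.ne ha) ?_
  rwa [← hx, σ.injective.ne_iff]

theorem SameCycle.insertAfter (hx : σ x = x) {b c : α} (h : σ.SameCycle b c) :
    (σ.insertAfter a x).SameCycle b c := by
  have hstep : ∀ τ : Perm α, ∀ z, τ.SameCycle z (τ z) := fun τ z ↦ (SameCycle.refl τ z).apply_right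
  refine SameCycle.map_of_forall_sameCycle_apply (π := id) (fun z ↦ ?_) h
  by_cases hza : z = a
  · subst hza
    have h₁ := hstep (σ.insertAfter z x) z
    have h₂ := hstep (σ.insertAfter z x) x
    rw [insertAfter_apply_left] at h₁
    rw [insertAfter_apply_right hx] at h₂
    exact h₁.trans h₂
  by_cases hzx : z = x
  · rw [id, id, hzx, hx]
  · have h₁ := hstep (σ.insertAfter a x) z
    rwa [insertAfter_apply_of_ne hx hza hzx] at h₁

theorem insertAfter_apply_comp {γ : Type*} (F : α → γ) (hx : σ x = x)
    (hF : ∀ z, F (σ z) = F z) (hxa : F x = F a) (z : α) : F (σ.insertAfter a x z) = F z := by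
  by_cases hza : z = a
  · rw [hza, insertAfter_apply_left, hxa]
  by_cases hzx : z = x
  · rw [hzx, insertAfter_apply_right hx, hF, hxa]
  · rw [insertAfter_apply_of_ne hx hza hzx, hF]

end Equiv.Perm

namespace SimpleGraph

variable {V : Type*} {G : SimpleGraph V}

theorem deleteEdges_singleton_adj_of_ne {a b v w : V} (ha : v ≠ a) (hb : v ≠ b) :
    (G.deleteEdges {s(a, b)}).Adj v w ↔ G.Adj v w := by
  simp [ha, hb]

theorem card_edgeSet_deleteEdges_add_one [Finite V] {u w : V} (huw : G.Adj u w) :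
    Nat.card (G.deleteEdges {s(u, w)}).edgeSet + 1 = Nat.card G.edgeSet := by
  rw [Nat.card_coe_set_eq, Nat.card_coe_set_eq, edgeSet_deleteEdges]
  exact Set.ncard_sdiff_singleton_add_one huw

instance Dart.finite [Finite V] : Finite G.Dart :=
  Finite.of_injective _ Dart.toProd_injective

theorem card_isolated_le_of_forall_exists_fst_eq {H : SimpleGraph V} [Finite V]
    (h : ∀ d : G.Dart, ∃ d' : H.Dart, d'.fst = d.fst) :
    Nat.card {v : V // ∀ d : H.Dart, d.fst ≠ v} ≤ Nat.card {v : V // ∀ d : G.Dart, d.fst ≠ v} := by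
  refine Nat.card_le_card_of_injective (fun v ↦ ⟨v.1, fun d hd ↦ ?_⟩)
    fun _ _ e ↦ Subtype.ext (Subtype.mk.inj e)
  obtain ⟨d', hd'⟩ := h d
  exact v.2 d' (hd'.trans hd)

def Dart.ofDeleteEdges {s : Set (Sym2 V)} (d : (G.deleteEdges s).Dart) : G.Dart :=
  ⟨d.toProd, (deleteEdges_adj.1 d.adj).1⟩

theorem Dart.ofDeleteEdges_injective {s : Set (Sym2 V)} :
    Function.Injective (Dart.ofDeleteEdges : (G.deleteEdges s).Dart → G.Dart) :=
  fun _ _ h ↦ Dart.ext _ _ (congrArg (fun d : G.Dart ↦ d.toProd) h)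

theorem Dart.edge_ofDeleteEdges_notMem {s : Set (Sym2 V)} (d : (G.deleteEdges s).Dart) :
    d.ofDeleteEdges.edge ∉ s :=
  (deleteEdges_adj.1 d.adj).2

def deleteEdgesDartEquiv (s : Set (Sym2 V)) :
    (G.deleteEdges s).Dart ≃ {d : G.Dart // d.edge ∉ s} where
  toFun d := ⟨d.ofDeleteEdges, d.edge_ofDeleteEdges_notMem⟩
  invFun d := ⟨d.1.toProd, deleteEdges_adj.2 ⟨d.1.adj, d.2⟩⟩
  left_inv _ := rfl
  right_inv _ := rfl

theorem Dart.eq_or_eq_or_exists_ofDeleteEdges {u w : V} (huw : G.Adj u w) (d : G.Dart) :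
    d = ⟨(u, w), huw⟩ ∨ d = ⟨(w, u), huw.symm⟩ ∨
      ∃ h : (G.deleteEdges {s(u, w)}).Dart, h.ofDeleteEdges = d := by
  by_cases hd : d.edge ∈ ({s(u, w)} : Set (Sym2 V))
  · rcases dart_edge_eq_mk'_iff.1 hd with h | h
    · exact .inl (Dart.ext _ _ h)
    · exact .inr (.inl (Dart.ext _ _ h))
  · exact .inr (.inr ⟨(deleteEdgesDartEquiv _).symm ⟨d, hd⟩, rfl⟩)

theorem Dart.ofDeleteEdges_ne {u w : V} (huw : G.Adj u w)
    (h : (G.deleteEdges {s(u, w)}).Dart) :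
    h.ofDeleteEdges ≠ ⟨(u, w), huw⟩ ∧ h.ofDeleteEdges ≠ ⟨(w, u), huw.symm⟩ := by
  have := h.edge_ofDeleteEdges_notMem
  refine ⟨fun e ↦ this ?_, fun e ↦ this ?_⟩ <;> simp [e, Sym2.eq_swap]

end SimpleGraph

namespace RotationSystem

open Equiv Equiv.Perm

section

variable {V : Type*} {G : SimpleGraph V} (R : RotationSystem G)

theorem facePerm_apply (d : G.Dart) : facePerm R d = R.rot d.symm :=
  rfl

theorem rot_ne_self_of_fst_eq {d d' : G.Dart} (hf : d.fst = d'.fst) (hne : d ≠ d') :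
    R.rot d ≠ d :=
  fun he ↦ hne ((R.star_cyc d d' hf).eq_of_left he)

/-- Otherwise `p`, `q`, `R.rot p`, `R.rot q` would be four distinct darts at `v`. -/
theorem rot_eq_or_rot_eq_of_card_adj_eq_three {v : V} (hv : Nat.card {w // G.Adj v w} = 3)
    {p q : G.Dart} (hp : p.fst = v) (hq : q.fst = v) (hpq : p ≠ q) :
    R.rot p = q ∨ R.rot q = p := by
  by_contra! h
  have hsnd : ∀ {d d' : G.Dart}, d.fst = v → d'.fst = v → d ≠ d' → d.snd ≠ d'.snd :=
    fun hd hd' hne e ↦ hne (Dart.ext _ _ (Prod.ext (hd.trans hd'.symm) e))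
  have hrp : (R.rot p).fst = v := (R.fst_rot p).trans hp
  have hrq : (R.rot q).fst = v := (R.fst_rot q).trans hq
  have hpp := R.rot_ne_self_of_fst_eq (hp.trans hq.symm) hpq
  have hqq := R.rot_ne_self_of_fst_eq (hq.trans hp.symm) hpq.symm
  have hrpq : R.rot p ≠ R.rot q := R.rot.injective.ne hpq
  have hsub : ({p.snd, q.snd, (R.rot p).snd, (R.rot q).snd} : Set V) ⊆ G.neighborSet v := by
    rintro x (rfl | rfl | rfl | rfl) <;> simp only [mem_neighborSet]
    · exact hp ▸ p.adj
    · exact hq ▸ q.adj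
    · exact hrp ▸ (R.rot p).adj
    · exact hrq ▸ (R.rot q).adj
  have hfin : (G.neighborSet v).ncard = 3 := (Nat.card_coe_set_eq _).symm.trans hv
  have h4 : ({p.snd, q.snd, (R.rot p).snd, (R.rot q).snd} : Set V).ncard = 4 := by
    rw [Set.ncard_insert_of_notMem, Set.ncard_insert_of_notMem, Set.ncard_pair]
    · exact hsnd hrp hrq hrpq
    · simp only [Set.mem_insert_iff, Set.mem_singleton_iff, not_or]
      exact ⟨hsnd hq hrp (Ne.symm h.1), hsnd hq hrq (Ne.symm hqq)⟩
    · simp only [Set.mem_insert_iff, Set.mem_singleton_iff, not_or]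
      exact ⟨hsnd hp hq hpq, hsnd hp hrp (Ne.symm hpp), hsnd hp hrq (Ne.symm h.2)⟩
  have := Set.ncard_le_ncard hsub (Set.finite_of_ncard_ne_zero (by omega))
  omega

theorem exists_sameCycle_facePerm_of_rot_eq {p q : G.Dart} (h : R.rot p = q) :
    ∃ d₁ d₂ : G.Dart, (facePerm R).SameCycle d₁ d₂ ∧ d₁.snd = p.snd ∧ d₂.snd = q.snd := by
  refine ⟨(facePerm R).symm p.symm, q, ?_, ?_, rfl⟩
  · have hq : facePerm R p.symm = q := by rw [facePerm_apply, Dart.symm_symm, h]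
    exact SameCycle.trans (y := p.symm) ⟨1, by simp⟩ ⟨1, by simp [hq]⟩
  · have := R.fst_rot ((facePerm R).symm p.symm).symm
    rw [← facePerm_apply, apply_symm_apply] at this
    exact this.symm

end

variable {V : Type*} {G : SimpleGraph V} {u w : V} (huw : G.Adj u w)
  (R : RotationSystem (G.deleteEdges {s(u, w)})) {d₁ d₂ : (G.deleteEdges {s(u, w)}).Dart}

open Classical in
noncomputable def addEdgeRot (d₁ d₂ : (G.deleteEdges {s(u, w)}).Dart) : Perm G.Dart :=
  ((R.rot.extendDomain (deleteEdgesDartEquiv _)).insertAfter d₁.symm.ofDeleteEdges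
    ⟨(u, w), huw⟩).insertAfter d₂.symm.ofDeleteEdges ⟨(w, u), huw.symm⟩

section Values

open Classical

variable {R}

private theorem extendDomain_apply_ofDeleteEdges (h : (G.deleteEdges {s(u, w)}).Dart) :
    R.rot.extendDomain (deleteEdgesDartEquiv _) h.ofDeleteEdges = (R.rot h).ofDeleteEdges :=
  extendDomain_apply_image R.rot (deleteEdgesDartEquiv _) h

private theorem extendDomain_apply_dart :
    R.rot.extendDomain (deleteEdgesDartEquiv _) ⟨(u, w), huw⟩ = ⟨(u, w), huw⟩ :=
  extendDomain_apply_not_subtype _ _ (not_not.2 rfl)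

private theorem extendDomain_apply_dart_symm :
    R.rot.extendDomain (deleteEdgesDartEquiv _) ⟨(w, u), huw.symm⟩ = ⟨(w, u), huw.symm⟩ :=
  extendDomain_apply_not_subtype _ _ (not_not.2 Sym2.eq_swap)

private theorem dart_symm_ne_dart : (⟨(w, u), huw.symm⟩ : G.Dart) ≠ ⟨(u, w), huw⟩ :=
  fun e ↦ huw.ne (congrArg (·.fst) e).symm

private theorem insertAfter_apply_dart_symm :
    (R.rot.extendDomain (deleteEdgesDartEquiv _)).insertAfter d₁.symm.ofDeleteEdges
      ⟨(u, w), huw⟩ ⟨(w, u), huw.symm⟩ = ⟨(w, u), huw.symm⟩ := by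
  rw [insertAfter_apply_of_ne (extendDomain_apply_dart huw)
    (Dart.ofDeleteEdges_ne huw _).2.symm (dart_symm_ne_dart huw),
    extendDomain_apply_dart_symm huw]

theorem addEdgeRot_apply_ofDeleteEdges {h : (G.deleteEdges {s(u, w)}).Dart} (h₁ : h ≠ d₁.symm)
    (h₂ : h ≠ d₂.symm) : R.addEdgeRot huw d₁ d₂ h.ofDeleteEdges = (R.rot h).ofDeleteEdges := by
  rw [addEdgeRot, insertAfter_apply_of_ne (insertAfter_apply_dart_symm huw)
      (Dart.ofDeleteEdges_injective.ne h₂) (Dart.ofDeleteEdges_ne huw _).2,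
    insertAfter_apply_of_ne (extendDomain_apply_dart huw)
      (Dart.ofDeleteEdges_injective.ne h₁) (Dart.ofDeleteEdges_ne huw _).1,
    extendDomain_apply_ofDeleteEdges]

theorem addEdgeRot_apply_left (hd : d₁ ≠ d₂) :
    R.addEdgeRot huw d₁ d₂ d₁.symm.ofDeleteEdges = ⟨(u, w), huw⟩ := by
  rw [addEdgeRot, insertAfter_apply_of_ne (insertAfter_apply_dart_symm huw)
      (Dart.ofDeleteEdges_injective.ne (Dart.symm_involutive.injective.ne hd))
      (Dart.ofDeleteEdges_ne huw _).2, insertAfter_apply_left]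

theorem addEdgeRot_apply_dart :
    R.addEdgeRot huw d₁ d₂ ⟨(u, w), huw⟩ = (R.rot d₁.symm).ofDeleteEdges := by
  rw [addEdgeRot, insertAfter_apply_of_ne (insertAfter_apply_dart_symm huw)
      (Dart.ofDeleteEdges_ne huw _).1.symm (dart_symm_ne_dart huw).symm,
    insertAfter_apply_right (extendDomain_apply_dart huw), extendDomain_apply_ofDeleteEdges]

theorem addEdgeRot_apply_right :
    R.addEdgeRot huw d₁ d₂ d₂.symm.ofDeleteEdges = ⟨(w, u), huw.symm⟩ := by
  rw [addEdgeRot, insertAfter_apply_left]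

theorem addEdgeRot_apply_dart_symm (hd : d₁ ≠ d₂) :
    R.addEdgeRot huw d₁ d₂ ⟨(w, u), huw.symm⟩ = (R.rot d₂.symm).ofDeleteEdges := by
  rw [addEdgeRot, insertAfter_apply_right (insertAfter_apply_dart_symm huw),
    insertAfter_apply_of_ne (extendDomain_apply_dart huw)
      (Dart.ofDeleteEdges_injective.ne (Dart.symm_involutive.injective.ne hd.symm))
      (Dart.ofDeleteEdges_ne huw _).1,
    extendDomain_apply_ofDeleteEdges]

end Values

theorem fst_addEdgeRot (h₁ : d₁.snd = u) (h₂ : d₂.snd = w) (d : G.Dart) :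
    (R.addEdgeRot huw d₁ d₂ d).fst = d.fst := by
  classical
  have hρ : ∀ d : G.Dart, (R.rot.extendDomain (deleteEdgesDartEquiv _) d).fst = d.fst := by
    intro d
    rcases Dart.eq_or_eq_or_exists_ofDeleteEdges huw d with rfl | rfl | ⟨h, rfl⟩
    · rw [extendDomain_apply_dart]
    · rw [extendDomain_apply_dart_symm huw]
    · rw [extendDomain_apply_ofDeleteEdges]
      exact R.fst_rot h
  refine insertAfter_apply_comp (·.fst) (insertAfter_apply_dart_symm huw)
    (insertAfter_apply_comp (·.fst) (extendDomain_apply_dart huw) hρ ?_) ?_ d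
  exacts [h₁.symm, h₂.symm]

theorem sameCycle_addEdgeRot {a b : (G.deleteEdges {s(u, w)}).Dart} (h : R.rot.SameCycle a b) :
    (R.addEdgeRot huw d₁ d₂).SameCycle a.ofDeleteEdges b.ofDeleteEdges := by
  classical
  exact ((sameCycle_extendDomain.2 h).insertAfter (extendDomain_apply_dart huw)).insertAfter
    (insertAfter_apply_dart_symm huw)

theorem exists_sameCycle_addEdgeRot (h₁ : d₁.snd = u) (h₂ : d₂.snd = w) (d : G.Dart) :
    ∃ h : (G.deleteEdges {s(u, w)}).Dart,
      h.fst = d.fst ∧ (R.addEdgeRot huw d₁ d₂).SameCycle h.ofDeleteEdges d := by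
  classical
  rcases Dart.eq_or_eq_or_exists_ofDeleteEdges huw d with rfl | rfl | ⟨h, rfl⟩
  · refine ⟨d₁.symm, h₁, SameCycle.insertAfter (insertAfter_apply_dart_symm huw) ⟨1, ?_⟩⟩
    rw [zpow_one, insertAfter_apply_left]
  · exact ⟨d₂.symm, h₂, 1, by rw [zpow_one, addEdgeRot, insertAfter_apply_left]⟩
  · exact ⟨h, rfl, SameCycle.refl _ _⟩

/-- The rotation system of `G` obtained by drawing the edge `uw` through the corner of `R` after
`d₁` (which ends at `u`) and the corner after `d₂` (which ends at `w`). -/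
noncomputable def addEdge (h₁ : d₁.snd = u) (h₂ : d₂.snd = w) : RotationSystem G where
  rot := R.addEdgeRot huw d₁ d₂
  fst_rot := R.fst_addEdgeRot huw h₁ h₂
  star_cyc d d' hdd' := by
    obtain ⟨h, hf, hc⟩ := R.exists_sameCycle_addEdgeRot huw h₁ h₂ d
    obtain ⟨h', hf', hc'⟩ := R.exists_sameCycle_addEdgeRot huw h₁ h₂ d'
    exact hc.symm.trans
      ((R.sameCycle_addEdgeRot huw (R.star_cyc h h' (by rw [hf, hf', hdd']))).trans hc')

variable (h₁ : d₁.snd = u) (h₂ : d₂.snd = w)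

theorem facePerm_addEdge_apply_ofDeleteEdges {h : (G.deleteEdges {s(u, w)}).Dart}
    (hh₁ : h ≠ d₁) (hh₂ : h ≠ d₂) :
    facePerm (R.addEdge huw h₁ h₂) h.ofDeleteEdges = (facePerm R h).ofDeleteEdges :=
  R.addEdgeRot_apply_ofDeleteEdges huw (Dart.symm_involutive.injective.ne hh₁)
    (Dart.symm_involutive.injective.ne hh₂)

theorem facePerm_addEdge_apply_left :
    facePerm (R.addEdge huw h₁ h₂) d₁.ofDeleteEdges = ⟨(u, w), huw⟩ :=
  R.addEdgeRot_apply_left huw (ne_of_apply_ne (·.snd) (by rw [h₁, h₂]; exact huw.ne))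

theorem facePerm_addEdge_apply_dart :
    facePerm (R.addEdge huw h₁ h₂) ⟨(u, w), huw⟩ = (facePerm R d₂).ofDeleteEdges :=
  R.addEdgeRot_apply_dart_symm huw (ne_of_apply_ne (·.snd) (by rw [h₁, h₂]; exact huw.ne))

theorem facePerm_addEdge_apply_right :
    facePerm (R.addEdge huw h₁ h₂) d₂.ofDeleteEdges = ⟨(w, u), huw.symm⟩ :=
  R.addEdgeRot_apply_right huw

theorem facePerm_addEdge_apply_dart_symm :
    facePerm (R.addEdge huw h₁ h₂) ⟨(w, u), huw.symm⟩ = (facePerm R d₁).ofDeleteEdges :=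
  R.addEdgeRot_apply_dart huw

variable [Finite V]

/-- The new edge splits the face through `d₁` and `d₂`: tracing from `u → w` one follows the old
face from `facePerm R d₂` and is sent back to `u → w` on reaching `d₁`, before `d₂` comes up
again. -/
theorem not_sameCycle_facePerm_addEdge (hsc : (facePerm R).SameCycle d₁ d₂) :
    ¬ (facePerm (R.addEdge huw h₁ h₂)).SameCycle ⟨(u, w), huw⟩ ⟨(w, u), huw.symm⟩ := by
  classical
  set φ := facePerm R
  have hd : d₁ ≠ d₂ := ne_of_apply_ne (·.snd) (by rw [h₁, h₂]; exact huw.ne)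
  have hex : ∃ n : ℕ, (φ ^ n) d₂ = d₁ := by
    obtain ⟨n, -, hn⟩ := hsc.symm.exists_pow_eq'
    exact ⟨n, hn⟩
  have hn : (φ ^ Nat.find hex) d₂ = d₁ := Nat.find_spec hex
  have hpos : 0 < Nat.find hex :=
    Nat.pos_of_ne_zero fun h ↦ hd (by rw [← hn, h, pow_zero, one_apply])
  have hbefore : ∀ j, 0 < j → j < Nat.find hex → (φ ^ j) d₂ ≠ d₁ ∧ (φ ^ j) d₂ ≠ d₂ := by
    refine fun j hj hjn ↦ ⟨Nat.find_min hex hjn, fun hj' ↦ Nat.find_min hex (Nat.sub_lt hpos hj) ?_⟩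
    have : (φ ^ (Nat.find hex - j)) ((φ ^ j) d₂) = d₁ := by
      rw [← mul_apply, ← pow_add, Nat.sub_add_cancel hjn.le, hn]
    rwa [hj'] at this
  let S : Set G.Dart :=
    insert ⟨(u, w), huw⟩ ((fun j ↦ ((φ ^ j) d₂).ofDeleteEdges) '' Set.Icc 1 (Nat.find hex))
  have hS : Set.MapsTo (facePerm (R.addEdge huw h₁ h₂)) S S := by
    rintro _ (rfl | ⟨j, ⟨hj, hjn⟩, rfl⟩)
    · rw [facePerm_addEdge_apply_dart]
      exact .inr ⟨1, ⟨le_rfl, hpos⟩, by simp [φ]⟩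
    · beta_reduce
      rcases hjn.lt_or_eq with hjn | rfl
      · have hj' := hbefore j hj hjn
        rw [facePerm_addEdge_apply_ofDeleteEdges huw R h₁ h₂ hj'.1 hj'.2]
        exact .inr ⟨j + 1, ⟨by omega, hjn⟩, by simp [φ, pow_succ']⟩
      · rw [hn, facePerm_addEdge_apply_left]
        exact .inl rfl
  intro hc
  rcases hc.mem_of_mapsTo hS (.inl rfl) with h | ⟨j, -, h⟩
  · exact dart_symm_ne_dart huw h
  · exact (Dart.ofDeleteEdges_ne huw _).2 h

theorem card_faces_lt_card_faces_addEdge (hsc : (facePerm R).SameCycle d₁ d₂) :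
    Nat.card (Quotient (SameCycle.setoid (facePerm R))) <
      Nat.card (Quotient (SameCycle.setoid (facePerm (R.addEdge huw h₁ h₂)))) := by
  classical
  -- `π` forgets the new edge, sending both of its darts into the face being split
  let π : G.Dart → (G.deleteEdges {s(u, w)}).Dart := fun d ↦
    if hd : d.edge ∉ ({s(u, w)} : Set (Sym2 V)) then (deleteEdgesDartEquiv _).symm ⟨d, hd⟩ else d₁
  have hπ : ∀ h, π h.ofDeleteEdges = h := fun h ↦ dif_pos h.edge_ofDeleteEdges_notMem
  have hπdp : π ⟨(u, w), huw⟩ = d₁ := dif_neg (not_not.2 rfl)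
  have hπdm : π ⟨(w, u), huw.symm⟩ = d₁ := dif_neg (not_not.2 Sym2.eq_swap)
  have hstep : ∀ h, (facePerm R).SameCycle h (facePerm R h) :=
    fun h ↦ (SameCycle.refl _ h).apply_right
  refine card_quotient_sameCycle_lt_of_surjective (π := π) (fun h ↦ ⟨_, hπ h⟩) (fun z ↦ ?_)
    (R.not_sameCycle_facePerm_addEdge huw h₁ h₂ hsc) (by rw [hπdp, hπdm])
  rcases Dart.eq_or_eq_or_exists_ofDeleteEdges huw z with rfl | rfl | ⟨h, rfl⟩
  · rw [facePerm_addEdge_apply_dart, hπ, hπdp]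
    exact hsc.trans (hstep d₂)
  · rw [facePerm_addEdge_apply_dart_symm, hπ, hπdm]
    exact hstep d₁
  · rw [hπ]
    by_cases hh₁ : h = d₁
    · rw [hh₁, facePerm_addEdge_apply_left, hπdp]
    by_cases hh₂ : h = d₂
    · rw [hh₂, facePerm_addEdge_apply_right, hπdm]
      exact hsc.symm
    · rw [facePerm_addEdge_apply_ofDeleteEdges huw R h₁ h₂ hh₁ hh₂, hπ]
      exact hstep h

theorem eulerDefect_addEdge_le (hsc : (facePerm R).SameCycle d₁ d₂) :
    eulerDefect (R.addEdge huw h₁ h₂) ≤ eulerDefect R := by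
  have hE := card_edgeSet_deleteEdges_add_one huw
  have hC := ConnectedComponent.card_le_card_of_le (G.deleteEdges_le {s(u, w)})
  have hF := R.card_faces_lt_card_faces_addEdge huw h₁ h₂ hsc
  have hI := card_isolated_le_of_forall_exists_fst_eq fun d ↦
    (R.exists_sameCycle_addEdgeRot huw h₁ h₂ d).imp fun _ ↦ And.left
  simp only [eulerDefect, numFaces]
  omega

end RotationSystem

/-- a cubic graph which is irreducible for an orientable surface `S_k`
contains no triangle. -/
theorem irreducible_cubic_triangle_free {V : Type*} [Fintype V] (G : SimpleGraph V)
    (hcubic : ∀ v : V, Nat.card {w : V // G.Adj v w} = 3)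
    (k : ℕ) (hirr : IrreducibleForSurface G k) :
    ∀ v₁ v₂ v₃ : V, ¬ (G.Adj v₁ v₂ ∧ G.Adj v₂ v₃ ∧ G.Adj v₁ v₃) := by
  rintro v₁ v₂ v₃ ⟨h₁₂, h₂₃, h₁₃⟩
  set H := G.deleteEdges {s(v₁, v₂)}
  have hHG : H ≠ G := ne_of_apply_ne (·.Adj v₁ v₂) (by simp [H, h₁₂])
  obtain ⟨R, hR⟩ := hirr.2 H (G.deleteEdges_le _) hHG
  have hadj : ∀ w, H.Adj v₃ w ↔ G.Adj v₃ w :=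
    fun _ ↦ deleteEdges_singleton_adj_of_ne h₁₃.ne' h₂₃.ne'
  have hdeg : Nat.card {w // H.Adj v₃ w} = 3 :=
    (Nat.card_congr (Equiv.subtypeEquivRight hadj)).trans (hcubic v₃)
  obtain ⟨d₁, d₂, hsc, h₁, h₂⟩ : ∃ d₁ d₂ : H.Dart,
      (facePerm R).SameCycle d₁ d₂ ∧ d₁.snd = v₁ ∧ d₂.snd = v₂ := by
    rcases R.rot_eq_or_rot_eq_of_card_adj_eq_three hdeg
      (p := ⟨(v₃, v₁), (hadj v₁).2 h₁₃.symm⟩) (q := ⟨(v₃, v₂), (hadj v₂).2 h₂₃.symm⟩) rfl rfl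
      (ne_of_apply_ne (·.snd) h₁₂.ne) with h | h
    · exact R.exists_sameCycle_facePerm_of_rot_eq h
    · obtain ⟨d₂, d₁, hsc, h₂, h₁⟩ := R.exists_sameCycle_facePerm_of_rot_eq h
      exact ⟨d₁, d₂, hsc.symm, h₁, h₂⟩
  exact hirr.1 ⟨R.addEdge h₁₂ h₁ h₂, (R.eulerDefect_addEdge_le h₁₂ h₁ h₂ hsc).trans hR⟩
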